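/- The generating function of plane partitions π with at most n rows and entries at most m, weighted by q^{|π|_c} where |π|_c = Σ_{(i,j)∈Des(π)} π_{ij}, equals ∏_{i=1}^{m} (1 − q^i)^{−n}. -/

import Mathlib

open scoped BigOperators

/-- A plane partition: a finitely supported `ℕ`-array (0-indexed) weakly
decreasing along rows and columns. -/
structure PlanePartition where
  entry : ℕ → ℕ → ℕ
  row_decr : ∀ i j, entry i (j + 1) ≤ entry i j
  col_decr : ∀ i j, entry (i + 1) j ≤ entry i j
  finite_support : {p : ℕ × ℕ | entry p.1 p.2 ≠ 0}.Finite

namespace PlanePartition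

/-- `π` has at most `n` (nonzero) rows. -/
def RowsLE (π : PlanePartition) (n : ℕ) : Prop := ∀ i j, n ≤ i → π.entry i j = 0

/-- `π` has at most `k` (nonzero) columns. -/
def ColsLE (π : PlanePartition) (k : ℕ) : Prop := ∀ i j, k ≤ j → π.entry i j = 0

/-- all entries of `π` are at most `m`. -/
def EntriesLE (π : PlanePartition) (m : ℕ) : Prop := ∀ i j, π.entry i j ≤ m

/-- The descent set of `π` (0-indexed cells). -/
def Des (π : PlanePartition) : Set (ℕ × ℕ) :=
  {p | π.entry (p.1 + 1) p.2 < π.entry p.1 p.2}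

/-- number of descents of `π`. -/
noncomputable def des (π : PlanePartition) : ℕ := π.Des.ncard

/-- `dmat π i ℓ` is the matrix entry `d_{i+1, ℓ+1}` of `Φ(π)`: the number of columns `j`
with `π_{ij} = ℓ+1 > π_{i+1,j}` (here `i`, `ℓ` are 0-indexed). -/
noncomputable def dmat (π : PlanePartition) (i ℓ : ℕ) : ℕ :=
  {j : ℕ | π.entry i j = ℓ + 1 ∧ π.entry (i + 1) j ≤ ℓ}.ncard

/-- the volume `|π|`. -/
noncomputable def vol (π : PlanePartition) : ℕ := ∑ᶠ p : ℕ × ℕ, π.entry p.1 p.2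

/-- the up-hook volume `|π|_{uh} = Σ_{(i,j) ∈ Des(π)} (π_{ij} + i - 1)` (1-indexed `i`;
in our 0-indexed convention the summand is `π.entry p.1 p.2 + p.1`). -/
noncomputable def uhvol (π : PlanePartition) : ℕ :=
  ∑ᶠ p ∈ π.Des, (π.entry p.1 p.2 + p.1)

/-- the corner volume `|π|_c = Σ_{(i,j) ∈ Des(π)} π_{ij}`. -/
noncomputable def cvol (π : PlanePartition) : ℕ :=
  ∑ᶠ p ∈ π.Des, π.entry p.1 p.2

/-- the trace `tr(π) = Σ_i π_{ii}`. -/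
noncomputable def trace (π : PlanePartition) : ℕ := ∑ᶠ i : ℕ, π.entry i i

/-- `colCount π v` is the number of columns of `π` containing the entry `v`. -/
noncomputable def colCount (π : PlanePartition) (v : ℕ) : ℕ :=
  {j : ℕ | ∃ i, π.entry i j = v}.ncard

/-- the length of row `i` (0-indexed) of `π`. -/
noncomputable def rowLen (π : PlanePartition) (i : ℕ) : ℕ :=
  {j : ℕ | π.entry i j ≠ 0}.ncard

/-- `π` is column-strict: entries strictly decrease down the columns (within the shape). -/
def ColStrict (π : PlanePartition) : Prop :=
  ∀ i j, π.entry i j ≠ 0 → π.entry (i + 1) j < π.entry i j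

/-- the shape of `π` is exactly the rectangle with `n` rows and `k` columns. -/
def ShapeRect (π : PlanePartition) (k n : ℕ) : Prop :=
  ∀ i j, π.entry i j ≠ 0 ↔ i < n ∧ j < k

end PlanePartition

/-- The Schur polynomial `s_{(k^n)}` of rectangular shape `(k^n)` in `N` variables
`x 0, …, x (N-1)`, defined via column-strict plane partitions of shape `(k^n)` with
entries at most `N`; the variable `x i` records entries equal to `i + 1`. -/
noncomputable def schurRect {R : Type*} [CommSemiring R] (k n N : ℕ) (x : ℕ → R) : R :=
  ∑ᶠ π ∈ {π : PlanePartition | π.ColStrict ∧ π.ShapeRect k n ∧ π.EntriesLE N},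
    ∏ i ∈ Finset.range N, x i ^ ({p : ℕ × ℕ | π.entry p.1 p.2 = i + 1}.ncard)

/-!
Record for each row `i` and value `v` the number `d i v` of columns `j` with
`π i j = v + 1 > π (i + 1) j`. The level lengths `L i v = #{j | v < π i j}` determine `π` and
satisfy `L i v = d i v + max (L (i + 1) v) (L i (v + 1))`, so `π ↦ d` is a bijection from plane
partitions with at most `n` rows and entries at most `m` onto `ℕ^(n × m)`. Each descent cell with
entry `v + 1` contributes `v + 1` to the corner volume, which thus becomes `∑ (v + 1) d i v`, and
such weighted matrices are counted by `∏_{i,v} (1 - q^(v + 1))⁻¹`.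
-/

open Finset PowerSeries

theorem Set.eq_Iio_ncard_of_isLowerSet {s : Set ℕ} (hs : IsLowerSet s) (hfin : s.Finite) :
    s = Set.Iio s.ncard := by
  obtain h | ⟨a, rfl⟩ := hs.eq_univ_or_Iio
  · exact absurd (h ▸ hfin) Set.infinite_univ
  · rw [Set.ncard_Iio_nat]

namespace PowerSeries

theorem inv_one_sub_X_pow_eq_mk {K : Type*} [Field K] {k : ℕ} (hk : k ≠ 0) :
    (1 - X ^ k : K⟦X⟧)⁻¹ = mk fun j => if k ∣ j then 1 else 0 := by
  rw [PowerSeries.inv_eq_iff_mul_eq_one (by simp [hk])]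
  ext j
  rw [mul_sub, mul_one, map_sub, coeff_mul_X_pow', coeff_one, coeff_mk]
  rcases Nat.eq_zero_or_pos j with rfl | hj
  · simp [hk]
  by_cases hkj : k ≤ j
  · have : k ∣ j ∨ j ≤ k ↔ k ∣ j :=
      ⟨fun h => h.elim id fun h' => le_antisymm h' hkj ▸ dvd_rfl, .inl⟩
    simp [hkj, hj.ne', this]
  · have : ¬k ∣ j := fun h => hkj (Nat.le_of_dvd hj h)
    simp [hkj, this, hj.ne']

theorem card_filter_dvd_finsuppAntidiag {ι : Type*} [Fintype ι] [DecidableEq ι] (w : ι → ℕ)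
    (hw : ∀ i, w i ≠ 0) (N : ℕ) :
    #{l ∈ univ.finsuppAntidiag N | ∀ i, w i ∣ l i} =
      Nat.card {f : ι → ℕ // ∑ i, w i * f i = N} := by
  rw [← Nat.card_eq_finsetCard]
  refine Nat.card_congr
    { toFun l := ⟨fun i => l.1 i / w i, ?_⟩
      invFun f := ⟨Finsupp.equivFunOnFinite.symm fun i => w i * f.1 i, ?_⟩
      left_inv l := ?_
      right_inv f := ?_ }
  · obtain ⟨⟨hsum, -⟩, hdvd⟩ := mem_filter.1 l.2 |>.imp_left mem_finsuppAntidiag.1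
    exact (sum_congr rfl fun i _ => Nat.mul_div_cancel' (hdvd i)).trans hsum
  · simpa using f.2
  · obtain ⟨-, hdvd⟩ := mem_filter.1 l.2
    ext i
    simp [Nat.mul_div_cancel' (hdvd i)]
  · ext i
    simp [Nat.mul_div_cancel_left _ (Nat.pos_of_ne_zero (hw i))]

theorem coeff_prod_inv_one_sub_X_pow {K : Type*} [Field K] {ι : Type*} [Fintype ι]
    (w : ι → ℕ) (hw : ∀ i, w i ≠ 0) (N : ℕ) :
    coeff N (∏ i, (1 - X ^ w i : K⟦X⟧)⁻¹) =
      Nat.card {f : ι → ℕ // ∑ i, w i * f i = N} := by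
  classical
  simp only [inv_one_sub_X_pow_eq_mk (hw _), coeff_prod, coeff_mk, prod_boole, mem_univ,
    forall_const]
  rw [sum_boole, card_filter_dvd_finsuppAntidiag w hw]

end PowerSeries

namespace PlanePartition

@[ext]
theorem ext {π σ : PlanePartition} (h : π.entry = σ.entry) : π = σ := by
  cases π; cases σ; cases h; rfl

section levelLen

variable (π : PlanePartition)

theorem entry_antitone (i : ℕ) : Antitone (π.entry i) :=
  antitone_nat_of_succ_le (π.row_decr i)

noncomputable def levelLen (i v : ℕ) : ℕ := {j | v < π.entry i j}.ncard

theorem lt_entry_iff_lt_levelLen {i v j : ℕ} : v < π.entry i j ↔ j < π.levelLen i v := by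
  have hfin : {j | v < π.entry i j}.Finite :=
    (π.finite_support.preimage fun _ _ _ _ h => (Prod.mk.inj h).2).subset
      fun j (hj : v < _) => (Nat.zero_lt_of_lt hj).ne'
  have hlower : IsLowerSet {j | v < π.entry i j} :=
    fun _ _ hba (ha : v < _) => ha.trans_le (π.entry_antitone i hba)
  exact Set.ext_iff.1 (Set.eq_Iio_ncard_of_isLowerSet hlower hfin) j

theorem levelLen_eq_zero_iff {i v : ℕ} : π.levelLen i v = 0 ↔ π.entry i 0 ≤ v := by
  rw [← not_lt, lt_entry_iff_lt_levelLen]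
  omega

theorem dmat_add_max_levelLen (i v : ℕ) :
    π.dmat i v + max (π.levelLen (i + 1) v) (π.levelLen i (v + 1)) = π.levelLen i v := by
  have hdown : π.levelLen (i + 1) v ≤ π.levelLen i v := le_of_forall_lt fun j hj => by
    rw [← lt_entry_iff_lt_levelLen] at hj ⊢
    exact hj.trans_le (π.col_decr i j)
  have hright : π.levelLen i (v + 1) ≤ π.levelLen i v := le_of_forall_lt fun j hj => by
    rw [← lt_entry_iff_lt_levelLen] at hj ⊢
    omega
  have hdescents : {j | π.entry i j = v + 1 ∧ π.entry (i + 1) j ≤ v} =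
      Set.Ico (max (π.levelLen (i + 1) v) (π.levelLen i (v + 1))) (π.levelLen i v) := by
    ext j
    have h₁ := π.lt_entry_iff_lt_levelLen (i := i) (v := v) (j := j)
    have h₂ := π.lt_entry_iff_lt_levelLen (i := i) (v := v + 1) (j := j)
    have h₃ := π.lt_entry_iff_lt_levelLen (i := i + 1) (v := v) (j := j)
    simp only [Set.mem_ofPred_eq, Set.mem_Ico, max_le_iff]
    omega
  rw [dmat, hdescents, Set.ncard_Ico_nat]
  omega

end levelLen

variable {n m : ℕ}

theorem cvol_eq_sum_dmat {π : PlanePartition} (hr : π.RowsLE n) (he : π.EntriesLE m) :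
    π.cvol = ∑ p : Fin n × Fin m, ((p.2 : ℕ) + 1) * π.dmat p.1 p.2 := by
  have hfin : π.Des.Finite :=
    π.finite_support.subset fun p (hp : _ < _) => (Nat.zero_lt_of_lt hp).ne'
  set D := hfin.toFinset
  have hD (p : ℕ × ℕ) : p ∈ D ↔ π.entry (p.1 + 1) p.2 < π.entry p.1 p.2 :=
    Set.Finite.mem_toFinset _
  let g : ℕ × ℕ → ℕ × ℕ := fun p => (p.1, π.entry p.1 p.2 - 1)
  have hg : ∀ p ∈ D, g p ∈ range n ×ˢ range m := by
    intro p hp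
    rw [hD] at hp
    have hn : p.1 < n := by
      by_contra h
      rw [hr p.1 p.2 (not_lt.1 h)] at hp
      omega
    have := he p.1 p.2
    simp only [g, mem_product, mem_range]
    omega
  have hfiber (i v : ℕ) :
      ∑ p ∈ D with g p = (i, v), π.entry p.1 p.2 = (v + 1) * π.dmat i v := by
    have hcells : (({p ∈ D | g p = (i, v)} : Finset (ℕ × ℕ)) : Set (ℕ × ℕ)) =
        Prod.mk i '' {j | π.entry i j = v + 1 ∧ π.entry (i + 1) j ≤ v} := by
      ext ⟨i', j⟩
      simp only [coe_filter, hD, g, Set.mem_ofPred_eq, Set.mem_image, Prod.mk.injEq]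
      constructor
      · rintro ⟨hdes, rfl, hv⟩
        exact ⟨j, by omega, rfl, rfl⟩
      · rintro ⟨j, hj, rfl, rfl⟩
        omega
    rw [sum_congr rfl (g := fun _ => v + 1), sum_const, smul_eq_mul, mul_comm, dmat,
      ← Set.ncard_image_of_injective _ (Prod.mk_right_injective i), ← hcells,
      Set.ncard_coe_finset]
    intro p hp
    rw [mem_filter, hD] at hp
    simp only [g, Prod.mk.injEq] at hp
    omega
  rw [cvol, finsum_mem_eq_finite_toFinset_sum _ hfin, ← sum_fiberwise_of_maps_to hg, sum_product]
  simp only [hfiber, sum_range, Fintype.sum_prod_type]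

/-- `dmat_add_max_levelLen` read as a recursion: the level lengths of the plane partition with
descent matrix `d`. -/
def levelLenOfDmat (d : Fin n × Fin m → ℕ) (i v : ℕ) : ℕ :=
  if h : i < n ∧ v < m then
    d (⟨i, h.1⟩, ⟨v, h.2⟩) + max (levelLenOfDmat d (i + 1) v) (levelLenOfDmat d i (v + 1))
  else 0
termination_by (n - i) + (m - v)

theorem levelLenOfDmat_dmat {π : PlanePartition} (hr : π.RowsLE n) (he : π.EntriesLE m)
    (i v : ℕ) :
    levelLenOfDmat (fun p : Fin n × Fin m => π.dmat p.1 p.2) i v = π.levelLen i v := by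
  fun_induction levelLenOfDmat with
  | case1 i v _ ih₁ ih₂ => rw [ih₁, ih₂, dmat_add_max_levelLen]
  | case2 i v h =>
    rw [eq_comm, levelLen_eq_zero_iff]
    rcases not_and_or.1 h with hi | hv
    · rw [hr i 0 (not_lt.1 hi)]
      exact Nat.zero_le v
    · exact (he i 0).trans (not_lt.1 hv)

section ofDmat

variable (d : Fin n × Fin m → ℕ)

theorem levelLenOfDmat_eq_zero {i v : ℕ} (h : ¬(i < n ∧ v < m)) :
    levelLenOfDmat d i v = 0 := by
  rw [levelLenOfDmat, dif_neg h]

theorem levelLenOfDmat_succ_left_le (i v : ℕ) :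
    levelLenOfDmat d (i + 1) v ≤ levelLenOfDmat d i v := by
  by_cases h : i < n ∧ v < m
  · rw [levelLenOfDmat.eq_def d i v, dif_pos h]
    omega
  · rw [levelLenOfDmat_eq_zero d h, levelLenOfDmat_eq_zero d (by omega)]

theorem levelLenOfDmat_succ_right_le (i v : ℕ) :
    levelLenOfDmat d i (v + 1) ≤ levelLenOfDmat d i v := by
  by_cases h : i < n ∧ v < m
  · rw [levelLenOfDmat.eq_def d i v, dif_pos h]
    omega
  · rw [levelLenOfDmat_eq_zero d h, levelLenOfDmat_eq_zero d (by omega)]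

theorem finite_setOf_lt_levelLenOfDmat (i j : ℕ) : {v | j < levelLenOfDmat d i v}.Finite :=
  (Set.finite_Iio m).subset fun v (hv : j < _) => by
    by_contra hvm
    rw [levelLenOfDmat_eq_zero d (by simp_all)] at hv
    omega

theorem lt_ncard_setOf_lt_levelLenOfDmat {i j v : ℕ} :
    v < {v | j < levelLenOfDmat d i v}.ncard ↔ j < levelLenOfDmat d i v := by
  have hlower : IsLowerSet {v | j < levelLenOfDmat d i v} := fun _ _ hba (ha : j < _) =>
    ha.trans_le (antitone_nat_of_succ_le (levelLenOfDmat_succ_right_le d i) hba)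
  exact (Set.ext_iff.1 (Set.eq_Iio_ncard_of_isLowerSet hlower
    (finite_setOf_lt_levelLenOfDmat d i j)) v).symm

noncomputable def ofDmat : PlanePartition where
  entry i j := {v | j < levelLenOfDmat d i v}.ncard
  row_decr i j := Set.ncard_le_ncard (fun v (hv : j + 1 < _) => (Nat.lt_succ_self j).trans hv)
    (finite_setOf_lt_levelLenOfDmat d i j)
  col_decr i j :=
    Set.ncard_le_ncard (fun v (hv : j < _) => hv.trans_le (levelLenOfDmat_succ_left_le d i v))
      (finite_setOf_lt_levelLenOfDmat d i j)
  finite_support := ((Set.finite_Iio n).prod (Set.finite_Iio (levelLenOfDmat d 0 0))).subset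
    fun p (hp : _ ≠ 0) => by
      have hp : p.2 < levelLenOfDmat d p.1 0 :=
        (lt_ncard_setOf_lt_levelLenOfDmat d).1 (Nat.pos_of_ne_zero hp)
      have hanti : Antitone (levelLenOfDmat d · 0) :=
        antitone_nat_of_succ_le fun i => levelLenOfDmat_succ_left_le d i 0
      refine ⟨?_, hp.trans_le (hanti (Nat.zero_le p.1))⟩
      by_contra hn
      rw [levelLenOfDmat_eq_zero d (by simp_all)] at hp
      omega

theorem lt_ofDmat_entry_iff {i j v : ℕ} : v < (ofDmat d).entry i j ↔ j < levelLenOfDmat d i v :=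
  lt_ncard_setOf_lt_levelLenOfDmat d

theorem levelLen_ofDmat (i v : ℕ) : (ofDmat d).levelLen i v = levelLenOfDmat d i v :=
  eq_of_forall_lt_iff fun j => by rw [← lt_entry_iff_lt_levelLen, lt_ofDmat_entry_iff]

theorem dmat_ofDmat (p : Fin n × Fin m) : (ofDmat d).dmat p.1 p.2 = d p := by
  have h := (ofDmat d).dmat_add_max_levelLen p.1 p.2
  rw [levelLen_ofDmat, levelLen_ofDmat, levelLen_ofDmat, levelLenOfDmat.eq_def d p.1 p.2,
    dif_pos ⟨p.1.isLt, p.2.isLt⟩] at h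
  simp only [Fin.eta, Prod.mk.eta] at h
  omega

theorem rowsLE_ofDmat : (ofDmat d).RowsLE n := fun i j hi => by
  by_contra h
  have := (lt_ofDmat_entry_iff d).1 (Nat.pos_of_ne_zero h)
  rw [levelLenOfDmat_eq_zero d (by omega)] at this
  omega

theorem entriesLE_ofDmat : (ofDmat d).EntriesLE m := fun i j => by
  by_contra h
  have := (lt_ofDmat_entry_iff d).1 (not_le.1 h)
  rw [levelLenOfDmat_eq_zero d (by omega)] at this
  omega

end ofDmat

theorem ofDmat_dmat {π : PlanePartition} (hr : π.RowsLE n) (he : π.EntriesLE m) :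
    ofDmat (fun p : Fin n × Fin m => π.dmat p.1 p.2) = π := by
  ext i j
  exact eq_of_forall_lt_iff fun v => by
    rw [lt_ofDmat_entry_iff, levelLenOfDmat_dmat hr he, lt_entry_iff_lt_levelLen]

noncomputable def dmatEquiv (n m N : ℕ) :
    {π : PlanePartition // π.RowsLE n ∧ π.EntriesLE m ∧ π.cvol = N} ≃
      {d : Fin n × Fin m → ℕ // ∑ p, ((p.2 : ℕ) + 1) * d p = N} where
  toFun π := ⟨fun p => π.1.dmat p.1 p.2, by
    rw [← cvol_eq_sum_dmat π.2.1 π.2.2.1, π.2.2.2]⟩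
  invFun d := ⟨ofDmat d.1, rowsLE_ofDmat d.1, entriesLE_ofDmat d.1, by
    simp only [cvol_eq_sum_dmat (rowsLE_ofDmat d.1) (entriesLE_ofDmat d.1), dmat_ofDmat, d.2]⟩
  left_inv π := Subtype.ext (ofDmat_dmat π.2.1 π.2.2.1)
  right_inv d := Subtype.ext (funext (dmat_ofDmat d.1))

end PlanePartition

/-- Coefficient-wise form of
`Σ_{π ∈ PP(∞,n,m)} q^{|π|_c} = Π_{i=1}^m (1 - q^i)^{-n}`. -/
theorem corner_volume_gen_fun (n m N : ℕ) :
    PowerSeries.coeff (R := ℚ) N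
      (∏ i ∈ Finset.range m, ((1 - PowerSeries.X ^ (i + 1) : PowerSeries ℚ)⁻¹) ^ n) =
    Nat.card {π : PlanePartition // π.RowsLE n ∧ π.EntriesLE m ∧ π.cvol = N} := by
  have hprod : ∏ i ∈ range m, ((1 - X ^ (i + 1) : ℚ⟦X⟧)⁻¹) ^ n =
      ∏ p : Fin n × Fin m, (1 - X ^ ((p.2 : ℕ) + 1) : ℚ⟦X⟧)⁻¹ := by
    simp only [Fintype.prod_prod_type, prod_const, card_univ, Fintype.card_fin]
    rw [Fin.prod_univ_eq_prod_range (fun i => (1 - X ^ (i + 1) : ℚ⟦X⟧)⁻¹), prod_pow]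
  rw [hprod, coeff_prod_inv_one_sub_X_pow _ fun _ => Nat.succ_ne_zero _,
    Nat.card_congr (PlanePartition.dmatEquiv n m N)]
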